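/- arXiv:2304.00949 — 2 statements merged into one kernel-verified Lean document; each statement's English description precedes it below -/
import Mathlib

section
/- Let n ∈ ℕ, γ ∈ (−∞,0), and let ω : ℝ^n → (0,∞) be an A₁-weight with constant A. Then there exists a constant C = C(n,γ) > 0, independent of ω, such that for every y ∈ ℝ^n and every r ∈ (0,∞), ∫_{ℝ^n \ B(y,r)} |x−y|^{γ−n} ω(x) dx ≤ C · A · r^{γ−n} · ∫_{B(y,r)} ω(x) dx. -/
open MeasureTheory Filter
open scoped ENNReal Topology

/-- `ω` is a Muckenhoupt `A₁`-weight with constant `A`: for every ball `B`,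
`(1/|B|) ∫_B ω ≤ A · ess inf_B ω`. -/
def IsA1Weight {n : ℕ} (ω : EuclideanSpace ℝ (Fin n) → ℝ) (A : ℝ) : Prop :=
  1 ≤ A ∧
    ∀ (x : EuclideanSpace ℝ (Fin n)) (r : ℝ), 0 < r →
      (∫⁻ y in Metric.ball x r, ENNReal.ofReal (ω y)) ≤
        ENNReal.ofReal A * volume (Metric.ball x r) *
          essInf (fun y => ENNReal.ofReal (ω y)) (volume.restrict (Metric.ball x r))

/-- The scalar identity used for each annulus. -/
lemma scalar_eq (n k : ℕ) (γ r : ℝ) (hr : 0 < r) :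
    ((2:ℝ) ^ k * r) ^ (γ - (n:ℝ)) * (2:ℝ) ^ ((k+1) * n) =
      (2:ℝ) ^ n * ((2:ℝ) ^ γ) ^ k * r ^ (γ - (n:ℝ)) := by
  have h2 : (0:ℝ) < 2 := by norm_num
  have hb : (0:ℝ) ≤ (2:ℝ) ^ k := by positivity
  rw [Real.mul_rpow hb hr.le, ← Real.rpow_natCast (2:ℝ) k, ← Real.rpow_natCast (2:ℝ) ((k+1)*n),
    ← Real.rpow_natCast ((2:ℝ) ^ γ) k, ← Real.rpow_natCast (2:ℝ) n,
    ← Real.rpow_mul h2.le, ← Real.rpow_mul h2.le,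
    mul_right_comm, ← Real.rpow_add h2, ← Real.rpow_add h2]
  congr 2
  push_cast
  ring

/-- essInf times measure is at most the integral. -/
lemma meas_mul_essInf_le {α : Type*} [MeasurableSpace α] (μ : Measure α)
    (f : α → ℝ≥0∞) : μ Set.univ * essInf f μ ≤ ∫⁻ x, f x ∂μ := by
  calc μ Set.univ * essInf f μ = ∫⁻ _, essInf f μ ∂μ := by
        rw [MeasureTheory.lintegral_const, mul_comm]
    _ ≤ ∫⁻ x, f x ∂μ := lintegral_mono_ae (ae_essInf_le)

/-- For `γ ∈ (−∞,0)` and any `A₁`-weight `ω` with constant `A`,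
there is `C = C(n,γ) > 0`, independent of `ω`, such that for every `y ∈ ℝⁿ` and
`r ∈ (0,∞)`,
`∫_{ℝⁿ \ B(y,r)} |x−y|^{γ−n} ω(x) dx ≤ C · A · r^{γ−n} · ∫_{B(y,r)} ω(x) dx`. -/
theorem statement_3 (n : ℕ) (hn : 0 < n) (γ : ℝ) (hγ : γ < 0) :
    ∃ C : ℝ, 0 < C ∧
      ∀ (ω : EuclideanSpace ℝ (Fin n) → ℝ) (A : ℝ),
        (∀ x, 0 < ω x) → LocallyIntegrable ω → IsA1Weight ω A →
        ∀ (y : EuclideanSpace ℝ (Fin n)) (r : ℝ), 0 < r →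
          (∫⁻ x in (Metric.ball y r)ᶜ,
              ENNReal.ofReal (‖x - y‖ ^ (γ - (n : ℝ)) * ω x)) ≤
            ENNReal.ofReal (C * A) * ENNReal.ofReal (r ^ (γ - (n : ℝ))) *
              ∫⁻ x in Metric.ball y r, ENNReal.ofReal (ω x) := by
  have h2γ : (2:ℝ) ^ γ < 1 := Real.rpow_lt_one_of_one_lt_of_neg one_lt_two hγ
  have h2γ0 : (0:ℝ) < (2:ℝ) ^ γ := Real.rpow_pos_of_pos two_pos γ
  have hsub : (0:ℝ) < 1 - (2:ℝ) ^ γ := by linarith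
  refine ⟨(1 - (2:ℝ)^γ)⁻¹ * 2 ^ n, by positivity, ?_⟩
  intro ω A hω hloc hA y r hr
  haveI : Nonempty (Fin n) := Fin.pos_iff_nonempty.mp hn
  set e : ℝ := γ - (n:ℝ) with he
  have hene : e ≤ 0 := by
    have : (0:ℝ) ≤ (n:ℝ) := Nat.cast_nonneg n
    simp only [he]; linarith
  set R : ℕ → ℝ := fun k => (2:ℝ) ^ k * r with hR
  have hRpos : ∀ k, 0 < R k := fun k => by positivity
  set s : ℕ → Set (EuclideanSpace ℝ (Fin n)) :=
    fun k => Metric.ball y (R (k+1)) \ Metric.ball y (R k) with hs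
  set I : ℝ≥0∞ := ∫⁻ x in Metric.ball y r, ENNReal.ofReal (ω x) with hI
  -- covering of the complement by the annuli
  have hcover : (Metric.ball y r)ᶜ ⊆ ⋃ k, s k := by
    intro x hx
    have hxr : r ≤ dist x y := by
      simpa [Metric.mem_ball, not_lt] using hx
    have ht1 : 1 ≤ dist x y / r := (one_le_div hr).mpr hxr
    set m : ℕ := ⌊dist x y / r⌋₊ with hm
    have hm1 : 1 ≤ m := Nat.one_le_iff_ne_zero.mpr (by
      simp only [hm, ne_eq, Nat.floor_eq_zero, not_lt]
      exact ht1)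
    set k : ℕ := Nat.log 2 m with hk
    have hlow : (2:ℝ) ^ k ≤ dist x y / r := by
      calc (2:ℝ) ^ k = ((2 ^ k : ℕ) : ℝ) := by push_cast; ring
        _ ≤ (m : ℝ) := by
            exact_mod_cast Nat.pow_log_le_self 2 (by omega)
        _ ≤ dist x y / r := Nat.floor_le (by linarith)
    have hhigh : dist x y / r < (2:ℝ) ^ (k+1) := by
      calc dist x y / r < (m : ℝ) + 1 := Nat.lt_floor_add_one _
        _ ≤ (2:ℝ) ^ (k+1) := by
            have := Nat.lt_pow_succ_log_self (by norm_num : 1 < 2) m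
            have : m + 1 ≤ 2 ^ (k + 1) := this
            exact_mod_cast this
    refine Set.mem_iUnion.mpr ⟨k, ?_, ?_⟩
    · have : dist x y < (2:ℝ) ^ (k+1) * r := by
        rw [← div_lt_iff₀ hr] at *; linarith [hhigh]
      simpa [Metric.mem_ball, hR] using this
    · have : (2:ℝ) ^ k * r ≤ dist x y := by
        rw [← le_div_iff₀ hr]; exact hlow
      simp only [Metric.mem_ball, hR, not_lt]
      exact this
  -- per-annulus bound
  have hterm : ∀ k : ℕ,
      (∫⁻ x in s k, ENNReal.ofReal (‖x - y‖ ^ e * ω x)) ≤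
        (ENNReal.ofReal ((2:ℝ)^γ)) ^ k *
          (ENNReal.ofReal ((2:ℝ)^n * A) * ENNReal.ofReal (r ^ e) * I) := by
    intro k
    have hAnn : MeasurableSet (s k) :=
      (Metric.isOpen_ball.measurableSet).diff Metric.isOpen_ball.measurableSet
    -- pointwise bound on the annulus
    have step1 : (∫⁻ x in s k, ENNReal.ofReal (‖x - y‖ ^ e * ω x)) ≤
        ENNReal.ofReal ((R k) ^ e) * ∫⁻ x in s k, ENNReal.ofReal (ω x) := by
      rw [← lintegral_const_mul' _ _ ENNReal.ofReal_ne_top]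
      refine setLIntegral_mono' hAnn fun x hx => ?_
      have hxk : R k ≤ ‖x - y‖ := by
        have := hx.2
        simpa [Metric.mem_ball, not_lt, dist_eq_norm] using this
      have hpw : ‖x - y‖ ^ e ≤ (R k) ^ e :=
        Real.rpow_le_rpow_of_nonpos (hRpos k) hxk hene
      calc ENNReal.ofReal (‖x - y‖ ^ e * ω x)
          ≤ ENNReal.ofReal ((R k) ^ e * ω x) :=
            ENNReal.ofReal_le_ofReal (mul_le_mul_of_nonneg_right hpw (hω x).le)
        _ = ENNReal.ofReal ((R k) ^ e) * ENNReal.ofReal (ω x) :=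
            ENNReal.ofReal_mul (Real.rpow_nonneg (hRpos k).le _)
    -- enlarge the annulus to the big ball and apply A1
    have step2 : (∫⁻ x in s k, ENNReal.ofReal (ω x)) ≤
        ENNReal.ofReal A * volume (Metric.ball y (R (k+1))) *
          essInf (fun x => ENNReal.ofReal (ω x))
            (volume.restrict (Metric.ball y (R (k+1)))) :=
      le_trans (lintegral_mono_set Set.diff_subset) (hA.2 y (R (k+1)) (hRpos (k+1)))
    -- essInf on the big ball is at most essInf on the small ball
    have hss : Metric.ball y r ⊆ Metric.ball y (R (k+1)) := by
      apply Metric.ball_subset_ball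
      show r ≤ (2:ℝ) ^ (k+1) * r
      have h1 : (1:ℝ) ≤ 2 ^ (k+1) := one_le_pow₀ (by norm_num)
      nlinarith
    have step3 : essInf (fun x => ENNReal.ofReal (ω x))
          (volume.restrict (Metric.ball y (R (k+1)))) ≤
        essInf (fun x => ENNReal.ofReal (ω x)) (volume.restrict (Metric.ball y r)) :=
      essInf_antitone_measure
        (Measure.absolutelyContinuous_of_le (Measure.restrict_mono hss le_rfl))
    -- volume of the big ball
    have hvol : volume (Metric.ball y (R (k+1))) =
        ENNReal.ofReal ((2:ℝ) ^ ((k+1)*n)) * volume (Metric.ball y r) := by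
      rw [Measure.addHaar_ball volume y (hRpos (k+1)).le, Measure.addHaar_ball volume y hr.le,
        finrank_euclideanSpace_fin, hR, mul_pow, ← pow_mul,
        ENNReal.ofReal_mul (by positivity), mul_assoc]
    -- essInf times small ball volume ≤ I
    have step4 : volume (Metric.ball y r) *
        essInf (fun x => ENNReal.ofReal (ω x)) (volume.restrict (Metric.ball y r)) ≤ I := by
      have := meas_mul_essInf_le (volume.restrict (Metric.ball y r))
        (fun x => ENNReal.ofReal (ω x))
      simpa [Measure.restrict_apply_univ, hI] using this
    -- combine
    calc (∫⁻ x in s k, ENNReal.ofReal (‖x - y‖ ^ e * ω x))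
        ≤ ENNReal.ofReal ((R k) ^ e) * ∫⁻ x in s k, ENNReal.ofReal (ω x) := step1
      _ ≤ ENNReal.ofReal ((R k) ^ e) *
            (ENNReal.ofReal A * volume (Metric.ball y (R (k+1))) *
              essInf (fun x => ENNReal.ofReal (ω x))
                (volume.restrict (Metric.ball y (R (k+1))))) :=
          mul_le_mul_right step2 _
      _ ≤ ENNReal.ofReal ((R k) ^ e) *
            (ENNReal.ofReal A *
              (ENNReal.ofReal ((2:ℝ) ^ ((k+1)*n)) * volume (Metric.ball y r)) *
              essInf (fun x => ENNReal.ofReal (ω x))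
                (volume.restrict (Metric.ball y r))) := by
          rw [hvol]
          exact mul_le_mul_right (mul_le_mul_right step3 _) _
      _ = ENNReal.ofReal ((R k) ^ e * (2:ℝ) ^ ((k+1)*n)) * ENNReal.ofReal A *
            (volume (Metric.ball y r) *
              essInf (fun x => ENNReal.ofReal (ω x))
                (volume.restrict (Metric.ball y r))) := by
          rw [ENNReal.ofReal_mul (Real.rpow_nonneg (hRpos k).le _)]
          ring
      _ ≤ ENNReal.ofReal ((R k) ^ e * (2:ℝ) ^ ((k+1)*n)) * ENNReal.ofReal A * I :=
          mul_le_mul_right step4 _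
      _ = (ENNReal.ofReal ((2:ℝ)^γ)) ^ k *
            (ENNReal.ofReal ((2:ℝ)^n * A) * ENNReal.ofReal (r ^ e) * I) := by
          rw [hR, scalar_eq n k γ r hr, ← he]
          rw [ENNReal.ofReal_mul (by positivity), ENNReal.ofReal_mul (by positivity),
            ENNReal.ofReal_mul (by positivity),
            ← ENNReal.ofReal_pow h2γ0.le]
          ring
  -- sum up
  calc (∫⁻ x in (Metric.ball y r)ᶜ, ENNReal.ofReal (‖x - y‖ ^ e * ω x))
      ≤ ∫⁻ x in ⋃ k, s k, ENNReal.ofReal (‖x - y‖ ^ e * ω x) :=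
        lintegral_mono_set hcover
    _ ≤ ∑' k, ∫⁻ x in s k, ENNReal.ofReal (‖x - y‖ ^ e * ω x) :=
        lintegral_iUnion_le _ _
    _ ≤ ∑' k, (ENNReal.ofReal ((2:ℝ)^γ)) ^ k *
          (ENNReal.ofReal ((2:ℝ)^n * A) * ENNReal.ofReal (r ^ e) * I) :=
        ENNReal.tsum_le_tsum hterm
    _ = (1 - ENNReal.ofReal ((2:ℝ)^γ))⁻¹ *
          (ENNReal.ofReal ((2:ℝ)^n * A) * ENNReal.ofReal (r ^ e) * I) := by
        rw [ENNReal.tsum_mul_right, ENNReal.tsum_geometric]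
    _ = ENNReal.ofReal ((1 - (2:ℝ)^γ)⁻¹ * 2 ^ n * A) * ENNReal.ofReal (r ^ e) * I := by
        rw [ENNReal.ofReal_mul (by positivity : (0:ℝ) ≤ (2:ℝ)^n),
          ENNReal.ofReal_mul (by positivity : (0:ℝ) ≤ (1 - (2:ℝ)^γ)⁻¹ * 2 ^ n),
          ENNReal.ofReal_mul (by positivity : (0:ℝ) ≤ (1 - (2:ℝ)^γ)⁻¹),
          ENNReal.ofReal_inv_of_pos hsub, ENNReal.ofReal_sub 1 h2γ0.le, ENNReal.ofReal_one]
        ring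
end

section
/- Let p ∈ [1,∞), γ ∈ (−∞,0) and q ∈ (0, −pγ). Then for every f ∈ C^1(ℝ) with f' ∈ C_c(ℝ), limsup_{λ→0⁺} λ·( ∫_ℝ ( ∫_ℝ 1_{E_{λ,γ/q}[f]}(x,y)·|x−y|^{γ−1} dy )^{p/q} dx )^{1/p} ≤ (−2/γ)^{1/q}·( ∫_ℝ |f'(x)|^p dx )^{1/p}. (Here 2 = κ(q,1).) -/
open MeasureTheory Filter
open scoped ENNReal Topology
open Set

lemma ring_bound {γ : ℝ} (hγ : γ < 0) (x r : ℝ) (hr : 0 < r) :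
    ∫⁻ y in {y : ℝ | r < |x - y|}, ENNReal.ofReal (|x - y| ^ (γ - 1)) ≤
      ENNReal.ofReal (2 / (-γ) * r ^ γ) := by
  have hγ' : γ ≠ 0 := ne_of_lt hγ
  have hIoi : ∫⁻ t in Ioi r, ENNReal.ofReal (|t| ^ (γ - 1)) = ENNReal.ofReal (r ^ γ / (-γ)) := by
    rw [setLIntegral_congr_fun measurableSet_Ioi
      (fun t (ht : t ∈ Ioi r) => by rw [abs_of_pos (hr.trans ht)])]
    rw [← ofReal_integral_eq_lintegral_ofReal (integrableOn_Ioi_rpow_of_lt (by linarith) hr)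
      ((ae_restrict_iff' measurableSet_Ioi).2
        (ae_of_all _ fun t ht => Real.rpow_nonneg (le_of_lt (hr.trans ht)) _))]
    rw [integral_Ioi_rpow_of_lt (by linarith) hr]
    congr 1
    rw [show γ - 1 + 1 = γ by ring, div_neg, neg_div]
  have hIio : ∫⁻ t in Iio (-r), ENNReal.ofReal (|t| ^ (γ - 1)) =
      ∫⁻ t in Ioi r, ENNReal.ofReal (|t| ^ (γ - 1)) := by
    have hmp := (Measure.measurePreserving_neg (volume : Measure ℝ)).setLIntegral_comp_preimage_emb
      (MeasurableEquiv.neg ℝ).measurableEmbedding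
      (fun t => ENNReal.ofReal (|t| ^ (γ - 1))) (Iio (-r))
    have hpre : (fun t : ℝ => -t) ⁻¹' (Iio (-r)) = Ioi r := by
      ext t; simp only [mem_preimage, mem_Iio, mem_Ioi]
      constructor <;> intro h <;> linarith
    rw [← hmp, show (Neg.neg ⁻¹' Iio (-r) : Set ℝ) = Ioi r from hpre]
    apply lintegral_congr
    intro t
    simp [abs_neg]
  have hsub := (Measure.measurePreserving_sub_left (volume : Measure ℝ) x).setLIntegral_comp_preimage_emb
      (MeasurableEquiv.subLeft x).measurableEmbedding
      (fun t => ENNReal.ofReal (|t| ^ (γ - 1))) {t : ℝ | r < |t|}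
  have hset1 : {y : ℝ | r < |x - y|} = (fun y : ℝ => x - y) ⁻¹' {t : ℝ | r < |t|} := rfl
  have hcoe : ⇑(MeasurableEquiv.subLeft x) = fun y : ℝ => x - y := rfl
  rw [hset1]
  rw [show (∫⁻ y in (fun y : ℝ => x - y) ⁻¹' {t : ℝ | r < |t|},
        ENNReal.ofReal (|x - y| ^ (γ - 1))) =
      ∫⁻ t in {t : ℝ | r < |t|}, ENNReal.ofReal (|t| ^ (γ - 1)) by
    rw [← hsub]]
  have hset2 : {t : ℝ | r < |t|} = Iio (-r) ∪ Ioi r := by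
    ext t
    simp only [mem_setOf_eq, lt_abs, mem_union, mem_Iio, mem_Ioi]
    constructor
    · rintro (h | h); · right; exact h
      · left; linarith
    · rintro (h | h); · right; linarith
      · left; exact h
  rw [hset2]
  calc ∫⁻ t in Iio (-r) ∪ Ioi r, ENNReal.ofReal (|t| ^ (γ - 1)) ≤
      (∫⁻ t in Iio (-r), ENNReal.ofReal (|t| ^ (γ - 1))) +
      (∫⁻ t in Ioi r, ENNReal.ofReal (|t| ^ (γ - 1))) := lintegral_union_le _ _ _
    _ = ENNReal.ofReal (r ^ γ / (-γ)) + ENNReal.ofReal (r ^ γ / (-γ)) := by rw [hIio, hIoi]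
    _ = ENNReal.ofReal (2 / (-γ) * r ^ γ) := by
        rw [← ENNReal.ofReal_add (div_nonneg (Real.rpow_nonneg hr.le _) (by linarith)) (div_nonneg (Real.rpow_nonneg hr.le _) (by linarith))]
        congr 1
        field_simp
        ring

lemma ring_bound0 {γ : ℝ} (hγ : γ < 0) (r : ℝ) (hr : 0 < r) :
    ∫⁻ y in {y : ℝ | r < |y|}, ENNReal.ofReal (|y| ^ (γ - 1)) ≤
      ENNReal.ofReal (2 / (-γ) * r ^ γ) := by
  have := ring_bound hγ 0 r hr
  simpa [zero_sub, abs_neg] using this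

lemma eq_of_deriv_zero (f : ℝ → ℝ) (hfd : Differentiable ℝ f) (x y : ℝ)
    (h : ∀ t ∈ Icc (min x y) (max x y), deriv f t = 0) : f x = f y := by
  have hx : x ∈ Icc (min x y) (max x y) := ⟨min_le_left _ _, le_max_left _ _⟩
  have hy : y ∈ Icc (min x y) (max x y) := ⟨min_le_right _ _, le_max_right _ _⟩
  have := Convex.norm_image_sub_le_of_norm_hasDerivWithin_le
    (f := f) (f' := deriv f) (C := 0) (s := Icc (min x y) (max x y))
    (fun t _ => (hfd t).hasDerivAt.hasDerivWithinAt)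
    (fun t ht => by rw [h t ht]; simp) (convex_Icc _ _) hx hy
  rw [zero_mul] at this
  exact (sub_eq_zero.1 (norm_le_zero_iff.1 this)).symm

lemma master_bound (γ q : ℝ) (hγ : γ < 0) (hq : 0 < q)
    (f : ℝ → ℝ) (hfd : Differentiable ℝ f)
    (R δ ε : ℝ) (hR : ∀ t : ℝ, R ≤ |t| → deriv f t = 0) (hδ : 0 < δ) (hδ1 : δ ≤ 1) (hε : 0 < ε)
    (hMVT : ∀ x y : ℝ, |x - y| ≤ δ → |f x - f y| ≤ (|deriv f x| + ε) * |x - y|)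
    (lam : ℝ) (hlam : 0 < lam) (x : ℝ) :
    (∫⁻ y in {y : ℝ | x ≠ y ∧ lam * |x - y| ^ ((1:ℝ) + γ / q) < |f x - f y|},
        ENNReal.ofReal (|x - y| ^ (γ - 1)))
      ≤ ENNReal.ofReal (lam ^ (-q) *
          (2 / (-γ) * ((Icc (-(R+1)) (R+1)).indicator (fun _ => (1:ℝ)) x * (|deriv f x| + ε)) ^ q
            + lam ^ q * (2 / (-γ) * (max δ (|x| - R)) ^ γ))) := by
  have hγ' : γ ≠ 0 := ne_of_lt hγ
  set M : ℝ := (Icc (-(R+1)) (R+1)).indicator (fun _ => (1:ℝ)) x * (|deriv f x| + ε) with hMdef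
  have hM0 : 0 ≤ M := by
    exact mul_nonneg (Set.indicator_nonneg (fun _ _ => zero_le_one) x) (by positivity)
  set ρ : ℝ := max δ (|x| - R) with hρdef
  have hρpos : 0 < ρ := lt_max_iff.2 (Or.inl hδ)
  set E : Set ℝ := {y : ℝ | x ≠ y ∧ lam * |x - y| ^ ((1:ℝ) + γ / q) < |f x - f y|} with hEdef
  -- basic facts
  have habs : ∀ y t : ℝ, t ∈ Icc (min x y) (max x y) → |x - t| ≤ |x - y| := by
    intro y t ht
    have h1 : x - y ≤ |x - y| := le_abs_self _
    have h2 : y - x ≤ |x - y| := by rw [abs_sub_comm]; exact le_abs_self _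
    have hl : x - |x - y| ≤ t := le_trans (le_min (by linarith [abs_nonneg (x - y)]) (by linarith)) ht.1
    have hr' : t ≤ x + |x - y| := le_trans ht.2 (max_le (by linarith [abs_nonneg (x - y)]) (by linarith))
    rw [abs_le]; constructor <;> linarith
  have hfareq : ∀ y : ℝ, |x - y| ≤ |x| - R → f x = f y := by
    intro y hxy
    apply eq_of_deriv_zero f hfd
    intro t ht
    apply hR
    have := habs y t ht
    have h1 : |x| - |t| ≤ |x - t| := abs_sub_abs_le_abs_sub _ _
    linarith
  have hneareq : R + δ < |x| → ∀ y : ℝ, |x - y| ≤ δ → f x = f y := by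
    intro hfar y hxy
    apply eq_of_deriv_zero f hfd
    intro t ht
    apply hR
    have := habs y t ht
    have h1 : |x| - |t| ≤ |x - t| := abs_sub_abs_le_abs_sub _ _
    linarith
  have hcond_pos : ∀ y ∈ E, (0:ℝ) < |f x - f y| := by
    intro y hy
    rcases hy with ⟨hne, hlt⟩
    exact lt_of_le_of_lt (mul_nonneg hlam.le (Real.rpow_nonneg (abs_nonneg _) _)) hlt
  -- splitting
  have hsplit : E ⊆ (E ∩ {y : ℝ | |x - y| ≤ δ}) ∪ {y : ℝ | ρ < |x - y|} := by
    intro y hy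
    by_cases hle : |x - y| ≤ δ
    · exact Or.inl ⟨hy, hle⟩
    · push_neg at hle
      right
      show ρ < |x - y|
      apply max_lt hle
      by_contra hcon
      push_neg at hcon
      have := hfareq y hcon
      have h0 := hcond_pos y hy
      rw [this, sub_self, abs_zero] at h0
      exact lt_irrefl _ h0
  have hA : (∫⁻ y in E ∩ {y : ℝ | |x - y| ≤ δ}, ENNReal.ofReal (|x - y| ^ (γ - 1)))
      ≤ ENNReal.ofReal (2 / (-γ) * (M / lam) ^ q) := by
    by_cases hfar : R + δ < |x|
    · have hempty : E ∩ {y : ℝ | |x - y| ≤ δ} = ∅ := by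
        rw [eq_empty_iff_forall_notMem]
        rintro y ⟨hyE, hyd⟩
        have := hneareq hfar y hyd
        have h0 := hcond_pos y hyE
        rw [this, sub_self, abs_zero] at h0
        exact lt_irrefl _ h0
      rw [hempty]
      simp
    · push_neg at hfar
      have hxmem : x ∈ Icc (-(R+1)) (R+1) := by
        rw [mem_Icc]
        have := abs_le.1 (le_trans hfar (by linarith) : |x| ≤ R + 1)
        exact ⟨by linarith [this.1], this.2⟩
      have hMeq : M = |deriv f x| + ε := by rw [hMdef, indicator_of_mem hxmem, one_mul]
      have hMpos : 0 < M := by rw [hMeq]; positivity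
      set r : ℝ := (M / lam) ^ (q / γ) with hrdef
      have hrpos : 0 < r := Real.rpow_pos_of_pos (div_pos hMpos hlam) _
      have hsubr : E ∩ {y : ℝ | |x - y| ≤ δ} ⊆ {y : ℝ | r < |x - y|} := by
        rintro y ⟨⟨hne, hcondy⟩, (hyd : |x - y| ≤ δ)⟩
        have ha : 0 < |x - y| := abs_pos.2 (sub_ne_zero.2 hne)
        have e1 : |x - y| ^ ((1:ℝ) + γ / q) = |x - y| * |x - y| ^ (γ / q) := by
          rw [Real.rpow_add ha, Real.rpow_one]
        have h2 : lam * (|x - y| * |x - y| ^ (γ / q)) < M * |x - y| :=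
          lt_of_lt_of_le (by rw [← e1]; exact hcondy) (by rw [hMeq]; exact hMVT x y hyd)
        have h3 : lam * |x - y| ^ (γ / q) < M := by
          have h4 : (lam * |x - y| ^ (γ / q)) * |x - y| < M * |x - y| := by
            calc (lam * |x - y| ^ (γ / q)) * |x - y| = lam * (|x - y| * |x - y| ^ (γ / q)) := by ring
            _ < M * |x - y| := h2
          exact lt_of_mul_lt_mul_right h4 ha.le
        have h5 : |x - y| ^ (γ / q) < M / lam := (lt_div_iff₀ hlam).2 (by linarith [mul_comm lam (|x - y| ^ (γ / q))])
        have h6 : (M / lam) ^ (q / γ) < (|x - y| ^ (γ / q)) ^ (q / γ) :=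
          Real.rpow_lt_rpow_of_neg (Real.rpow_pos_of_pos ha _) h5 (div_neg_of_pos_of_neg hq hγ)
        have h7 : (|x - y| ^ (γ / q)) ^ (q / γ) = |x - y| := by
          rw [← Real.rpow_mul ha.le]
          rw [show (γ / q) * (q / γ) = 1 by field_simp]
          exact Real.rpow_one _
        show r < |x - y|
        rw [hrdef]
        rw [h7] at h6
        exact h6
      calc (∫⁻ y in E ∩ {y : ℝ | |x - y| ≤ δ}, ENNReal.ofReal (|x - y| ^ (γ - 1)))
          ≤ ∫⁻ y in {y : ℝ | r < |x - y|}, ENNReal.ofReal (|x - y| ^ (γ - 1)) :=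
            lintegral_mono_set hsubr
        _ ≤ ENNReal.ofReal (2 / (-γ) * r ^ γ) := ring_bound hγ x r hrpos
        _ = ENNReal.ofReal (2 / (-γ) * (M / lam) ^ q) := by
            congr 2
            rw [hrdef, ← Real.rpow_mul (div_nonneg hMpos.le hlam.le), div_mul_cancel₀ q hγ']
  have hB : (∫⁻ y in {y : ℝ | ρ < |x - y|}, ENNReal.ofReal (|x - y| ^ (γ - 1)))
      ≤ ENNReal.ofReal (2 / (-γ) * ρ ^ γ) := ring_bound hγ x ρ hρpos
  calc (∫⁻ y in E, ENNReal.ofReal (|x - y| ^ (γ - 1)))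
      ≤ ∫⁻ y in (E ∩ {y : ℝ | |x - y| ≤ δ}) ∪ {y : ℝ | ρ < |x - y|},
          ENNReal.ofReal (|x - y| ^ (γ - 1)) := lintegral_mono_set hsplit
    _ ≤ (∫⁻ y in E ∩ {y : ℝ | |x - y| ≤ δ}, ENNReal.ofReal (|x - y| ^ (γ - 1))) +
        (∫⁻ y in {y : ℝ | ρ < |x - y|}, ENNReal.ofReal (|x - y| ^ (γ - 1))) :=
          lintegral_union_le _ _ _
    _ ≤ ENNReal.ofReal (2 / (-γ) * (M / lam) ^ q) + ENNReal.ofReal (2 / (-γ) * ρ ^ γ) :=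
          add_le_add hA hB
    _ = ENNReal.ofReal (lam ^ (-q) * (2 / (-γ) * M ^ q + lam ^ q * (2 / (-γ) * ρ ^ γ))) := by
        rw [← ENNReal.ofReal_add
          (mul_nonneg (div_nonneg (by norm_num) (by linarith)) (Real.rpow_nonneg (div_nonneg hM0 hlam.le) _))
          (mul_nonneg (div_nonneg (by norm_num) (by linarith)) (Real.rpow_nonneg hρpos.le _))]
        congr 1
        have e1 : (M / lam) ^ q = M ^ q / lam ^ q := Real.div_rpow hM0 hlam.le q
        have e2 : lam ^ (-q) = (lam ^ q)⁻¹ := Real.rpow_neg hlam.le q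
        have e3 : (0:ℝ) < lam ^ q := Real.rpow_pos_of_pos hlam q
        rw [e1, e2]
        field_simp

lemma outer_bound (p γ q : ℝ) (hp : 1 ≤ p) (hγ : γ < 0) (hq : 0 < q)
    (f : ℝ → ℝ) (hfd : Differentiable ℝ f)
    (R δ ε : ℝ) (hR : ∀ t : ℝ, R ≤ |t| → deriv f t = 0) (hδ : 0 < δ) (hδ1 : δ ≤ 1) (hε : 0 < ε)
    (hMVT : ∀ x y : ℝ, |x - y| ≤ δ → |f x - f y| ≤ (|deriv f x| + ε) * |x - y|)
    (lam : ℝ) (hlam : 0 < lam) :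
    ENNReal.ofReal lam *
      (∫⁻ x, (∫⁻ y in {y : ℝ | x ≠ y ∧ lam * |x - y| ^ ((1:ℝ) + γ / q) < |f x - f y|},
          ENNReal.ofReal (|x - y| ^ (γ - 1))) ^ (p / q)) ^ (1 / p)
    ≤ (∫⁻ x, ENNReal.ofReal ((2 / (-γ) *
          ((Icc (-(R+1)) (R+1)).indicator (fun _ => (1:ℝ)) x * (|deriv f x| + ε)) ^ q
        + lam ^ q * (2 / (-γ) * (max δ (|x| - R)) ^ γ)) ^ (p / q))) ^ (1 / p) := by
  have hp0 : 0 < p := lt_of_lt_of_le one_pos hp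
  have hs : 0 < p / q := div_pos hp0 hq
  have hc0 : (0:ℝ) ≤ 2 / (-γ) := div_nonneg (by norm_num) (by linarith)
  set u : ℝ → ℝ := fun x => 2 / (-γ) *
      ((Icc (-(R+1)) (R+1)).indicator (fun _ => (1:ℝ)) x * (|deriv f x| + ε)) ^ q
      + lam ^ q * (2 / (-γ) * (max δ (|x| - R)) ^ γ) with hudef
  have hu0 : ∀ x, 0 ≤ u x := by
    intro x
    apply add_nonneg
    · exact mul_nonneg hc0 (Real.rpow_nonneg
        (mul_nonneg (Set.indicator_nonneg (fun _ _ => zero_le_one) x) (by positivity)) _)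
    · exact mul_nonneg (Real.rpow_nonneg hlam.le _)
        (mul_nonneg hc0 (Real.rpow_nonneg (le_of_lt (lt_max_iff.2 (Or.inl hδ))) _))
  have hstep : (∫⁻ x, (∫⁻ y in {y : ℝ | x ≠ y ∧ lam * |x - y| ^ ((1:ℝ) + γ / q) < |f x - f y|},
          ENNReal.ofReal (|x - y| ^ (γ - 1))) ^ (p / q))
      ≤ ENNReal.ofReal (lam ^ (-p)) * ∫⁻ x, ENNReal.ofReal (u x ^ (p / q)) := by
    rw [← lintegral_const_mul' _ _ ENNReal.ofReal_ne_top]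
    apply lintegral_mono
    intro x
    calc (∫⁻ y in {y : ℝ | x ≠ y ∧ lam * |x - y| ^ ((1:ℝ) + γ / q) < |f x - f y|},
            ENNReal.ofReal (|x - y| ^ (γ - 1))) ^ (p / q)
        ≤ (ENNReal.ofReal (lam ^ (-q) * u x)) ^ (p / q) :=
          ENNReal.rpow_le_rpow (master_bound γ q hγ hq f hfd R δ ε hR hδ hδ1 hε hMVT lam hlam x) hs.le
      _ = ENNReal.ofReal ((lam ^ (-q) * u x) ^ (p / q)) :=
          ENNReal.ofReal_rpow_of_nonneg (mul_nonneg (Real.rpow_nonneg hlam.le _) (hu0 x)) hs.le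
      _ = ENNReal.ofReal (lam ^ (-p)) * ENNReal.ofReal (u x ^ (p / q)) := by
          rw [Real.mul_rpow (Real.rpow_nonneg hlam.le _) (hu0 x)]
          rw [← Real.rpow_mul hlam.le]
          rw [show -q * (p / q) = -p by field_simp]
          exact ENNReal.ofReal_mul (Real.rpow_nonneg hlam.le _)
  calc ENNReal.ofReal lam *
      (∫⁻ x, (∫⁻ y in {y : ℝ | x ≠ y ∧ lam * |x - y| ^ ((1:ℝ) + γ / q) < |f x - f y|},
          ENNReal.ofReal (|x - y| ^ (γ - 1))) ^ (p / q)) ^ (1 / p)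
      ≤ ENNReal.ofReal lam *
        (ENNReal.ofReal (lam ^ (-p)) * ∫⁻ x, ENNReal.ofReal (u x ^ (p / q))) ^ (1 / p) :=
        mul_le_mul_right (ENNReal.rpow_le_rpow hstep (by positivity)) _
    _ = (∫⁻ x, ENNReal.ofReal (u x ^ (p / q))) ^ (1 / p) := by
        rw [ENNReal.mul_rpow_of_nonneg _ _ (by positivity : (0:ℝ) ≤ 1 / p)]
        rw [ENNReal.ofReal_rpow_of_nonneg (Real.rpow_nonneg hlam.le _) (by positivity : (0:ℝ) ≤ 1 / p)]
        rw [← Real.rpow_mul hlam.le]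
        rw [show -p * (1 / p) = -1 by field_simp]
        rw [Real.rpow_neg_one]
        rw [← mul_assoc, ← ENNReal.ofReal_mul hlam.le, mul_inv_cancel₀ (ne_of_gt hlam),
          ENNReal.ofReal_one, one_mul]

lemma u_fin (p γ q : ℝ) (hp : 1 ≤ p) (hγ : γ < 0) (hq : 0 < q) (hq2 : q < -(p * γ))
    (f : ℝ → ℝ) (R δ ε C : ℝ) (hR1 : 1 ≤ R) (hδ : 0 < δ) (hδ1 : δ ≤ 1) (hε : 0 < ε)
    (hC : ∀ t, |deriv f t| ≤ C) :
    ∫⁻ x, ENNReal.ofReal ((2 / (-γ) *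
        ((Icc (-(R+1)) (R+1)).indicator (fun _ => (1:ℝ)) x * (|deriv f x| + ε)) ^ q
      + 2 / (-γ) * (max δ (|x| - R)) ^ γ) ^ (p / q)) ≠ ∞ := by
  have hp0 : 0 < p := lt_of_lt_of_le one_pos hp
  have hs : 0 < p / q := div_pos hp0 hq
  have hc0 : (0:ℝ) ≤ 2 / (-γ) := div_nonneg (by norm_num) (by linarith)
  have hC0 : 0 ≤ C := le_trans (abs_nonneg _) (hC 0)
  have hγpq : γ * (p / q) < -1 := by
    rw [show γ * (p / q) = γ * p / q by ring, div_lt_iff₀ hq]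
    nlinarith
  set γ' : ℝ := γ * (p / q) + 1 with hγ'def
  have hγ'neg : γ' < 0 := by rw [hγ'def]; linarith
  set v : ℝ → ℝ := fun x => 2 / (-γ) *
      ((Icc (-(R+1)) (R+1)).indicator (fun _ => (1:ℝ)) x * (|deriv f x| + ε)) ^ q
      + 2 / (-γ) * (max δ (|x| - R)) ^ γ with hvdef
  have hv0 : ∀ x, 0 ≤ v x := by
    intro x
    apply add_nonneg
    · exact mul_nonneg hc0 (Real.rpow_nonneg
        (mul_nonneg (Set.indicator_nonneg (fun _ _ => zero_le_one) x) (by positivity)) _)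
    · exact mul_nonneg hc0 (Real.rpow_nonneg (le_of_lt (lt_max_iff.2 (Or.inl hδ))) _)
  set K₀ : ℝ := 2 / (-γ) * (C + ε) ^ q + 2 / (-γ) * δ ^ γ with hK₀def
  set K₂ : ℝ := (2 / (-γ) * 2 ^ (-γ)) ^ (p / q) with hK₂def
  have hK₂0 : 0 ≤ K₂ := Real.rpow_nonneg (mul_nonneg hc0 (Real.rpow_nonneg (by norm_num) _)) _
  set G1 : ℝ → ℝ≥0∞ := (Icc (-(2*R+1)) (2*R+1)).indicator (fun _ => ENNReal.ofReal (K₀ ^ (p / q)))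
    with hG1def
  set G2 : ℝ → ℝ≥0∞ := {y : ℝ | 2*R+1 < |y|}.indicator
    (fun y => ENNReal.ofReal (K₂ * |y| ^ (γ' - 1))) with hG2def
  have hpt : ∀ x, ENNReal.ofReal (v x ^ (p / q)) ≤ G1 x + G2 x := by
    intro x
    by_cases hx : |x| ≤ 2*R+1
    · have hxmem : x ∈ Icc (-(2*R+1)) (2*R+1) := by
        rw [mem_Icc]; have := abs_le.1 hx; exact ⟨by linarith [this.1], this.2⟩
      have hvle : v x ≤ K₀ := by
        apply add_le_add
        · apply mul_le_mul_of_nonneg_left _ hc0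
          apply Real.rpow_le_rpow
            (mul_nonneg (Set.indicator_nonneg (fun _ _ => zero_le_one) x) (by positivity)) _ hq.le
          calc (Icc (-(R+1)) (R+1)).indicator (fun _ => (1:ℝ)) x * (|deriv f x| + ε)
              ≤ 1 * (|deriv f x| + ε) := by
                apply mul_le_mul_of_nonneg_right _ (by positivity)
                exact Set.indicator_apply_le' (fun _ => le_refl 1) (fun _ => zero_le_one)
            _ ≤ C + ε := by rw [one_mul]; linarith [hC x]
        · exact mul_le_mul_of_nonneg_left
            (Real.rpow_le_rpow_of_nonpos hδ (le_max_left _ _) hγ.le) hc0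
      calc ENNReal.ofReal (v x ^ (p / q)) ≤ ENNReal.ofReal (K₀ ^ (p / q)) :=
            ENNReal.ofReal_le_ofReal (Real.rpow_le_rpow (hv0 x) hvle hs.le)
        _ = G1 x := by rw [hG1def, indicator_of_mem hxmem]
        _ ≤ G1 x + G2 x := le_self_add
    · push_neg at hx
      have hχ0 : (Icc (-(R+1)) (R+1)).indicator (fun _ => (1:ℝ)) x = 0 := by
        apply indicator_of_notMem
        intro hmem
        rw [mem_Icc] at hmem
        have : |x| ≤ R + 1 := abs_le.2 ⟨by linarith [hmem.1], hmem.2⟩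
        linarith
      have hρeq : max δ (|x| - R) = |x| - R := max_eq_right (by linarith)
      have hveq : v x = 2 / (-γ) * (|x| - R) ^ γ := by
        rw [hvdef]
        simp only [hχ0, zero_mul, Real.zero_rpow hq.ne', mul_zero, zero_add, hρeq]
      have hhalf : |x| / 2 ≤ |x| - R := by linarith
      have hhalfpos : 0 < |x| / 2 := by linarith
      have hvle : v x ≤ (2 / (-γ) * 2 ^ (-γ)) * |x| ^ γ := by
        rw [hveq]
        have h1 : (|x| - R) ^ γ ≤ (|x| / 2) ^ γ :=
          Real.rpow_le_rpow_of_nonpos hhalfpos hhalf hγ.le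
        have h2 : (|x| / 2) ^ γ = |x| ^ γ * 2 ^ (-γ) := by
          rw [Real.div_rpow (abs_nonneg _) (by norm_num), Real.rpow_neg (by norm_num)]
          ring
        calc 2 / (-γ) * (|x| - R) ^ γ ≤ 2 / (-γ) * (|x| / 2) ^ γ :=
              mul_le_mul_of_nonneg_left h1 hc0
          _ = (2 / (-γ) * 2 ^ (-γ)) * |x| ^ γ := by rw [h2]; ring
      have hfinal : v x ^ (p / q) ≤ K₂ * |x| ^ (γ' - 1) := by
        calc v x ^ (p / q) ≤ ((2 / (-γ) * 2 ^ (-γ)) * |x| ^ γ) ^ (p / q) :=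
              Real.rpow_le_rpow (hv0 x) hvle hs.le
          _ = K₂ * |x| ^ (γ' - 1) := by
              rw [Real.mul_rpow (mul_nonneg hc0 (Real.rpow_nonneg (by norm_num) _))
                (Real.rpow_nonneg (abs_nonneg _) _)]
              rw [← Real.rpow_mul (abs_nonneg _)]
              rw [show γ * (p / q) = γ' - 1 by rw [hγ'def]; ring]
      calc ENNReal.ofReal (v x ^ (p / q)) ≤ ENNReal.ofReal (K₂ * |x| ^ (γ' - 1)) :=
            ENNReal.ofReal_le_ofReal hfinal
        _ = G2 x := by rw [hG2def, indicator_of_mem (by exact hx : x ∈ {y : ℝ | 2*R+1 < |y|})]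
        _ ≤ G1 x + G2 x := le_add_self
  have hG1meas : Measurable G1 := measurable_const.indicator measurableSet_Icc
  have hsetmeas : MeasurableSet {y : ℝ | 2*R+1 < |y|} :=
    (isOpen_lt continuous_const continuous_abs).measurableSet
  have hG1int : ∫⁻ x, G1 x ≠ ∞ := by
    rw [hG1def, lintegral_indicator measurableSet_Icc, setLIntegral_const]
    exact ENNReal.mul_ne_top ENNReal.ofReal_ne_top (by simp [Real.volume_Icc])
  have hG2int : ∫⁻ x, G2 x ≠ ∞ := by
    rw [hG2def, lintegral_indicator hsetmeas]
    apply ne_of_lt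
    calc ∫⁻ y in {y : ℝ | 2*R+1 < |y|}, ENNReal.ofReal (K₂ * |y| ^ (γ' - 1))
        = ENNReal.ofReal K₂ * ∫⁻ y in {y : ℝ | 2*R+1 < |y|}, ENNReal.ofReal (|y| ^ (γ' - 1)) := by
          rw [← lintegral_const_mul' _ _ ENNReal.ofReal_ne_top]
          exact setLIntegral_congr_fun hsetmeas
            (fun y _ => ENNReal.ofReal_mul hK₂0)
      _ ≤ ENNReal.ofReal K₂ * ENNReal.ofReal (2 / (-γ') * (2*R+1) ^ γ') :=
          mul_le_mul_right (ring_bound0 hγ'neg (2*R+1) (by linarith)) _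
      _ < ∞ := ENNReal.mul_lt_top ENNReal.ofReal_lt_top ENNReal.ofReal_lt_top
  refine ne_top_of_le_ne_top (ENNReal.add_ne_top.2 ⟨hG1int, hG2int⟩)
    (le_trans (lintegral_mono hpt) (le_of_eq (lintegral_add_left hG1meas _)))

/-- For `p ∈ [1,∞)`, `γ ∈ (−∞,0)`, `q ∈ (0,−pγ)` and every
`f ∈ C¹(ℝ)` with `f' ∈ C_c(ℝ)`,
`limsup_{λ→0⁺} λ (∫ (∫ 1_{E_{λ,γ/q}[f]} |x−y|^(γ−1) dy)^(p/q) dx)^(1/p)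
  ≤ (−2/γ)^(1/q) (∫ |f'|^p)^(1/p)` (here `2 = κ(q,1)`). -/
theorem statement_10 (p γ q : ℝ)
    (hp : 1 ≤ p) (hγ : γ < 0) (hq : 0 < q) (hq2 : q < -(p * γ)) :
    ∀ f : ℝ → ℝ, ContDiff ℝ 1 f → HasCompactSupport (deriv f) →
      Filter.limsup
          (fun lam : ℝ =>
            ENNReal.ofReal lam *
              (∫⁻ x,
                  (∫⁻ y in {y : ℝ | x ≠ y ∧ lam * |x - y| ^ ((1 : ℝ) + γ / q) < |f x - f y|},
                    ENNReal.ofReal (|x - y| ^ (γ - 1))) ^ (p / q)) ^ (1 / p))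
          (𝓝[>] (0 : ℝ))
        ≤ ENNReal.ofReal ((-2 / γ) ^ (1 / q)) *
            (∫⁻ x, ENNReal.ofReal (|deriv f x| ^ p)) ^ (1 / p) := by
  intro f hf hsupp
  have hp0 : 0 < p := lt_of_lt_of_le one_pos hp
  have hq' : q ≠ 0 := ne_of_gt hq
  have hs : 0 < p / q := div_pos hp0 hq
  have hc0 : (0:ℝ) ≤ 2 / (-γ) := div_nonneg (by norm_num) (by linarith)
  have hfd : Differentiable ℝ f := hf.differentiable one_ne_zero
  have hf'cont : Continuous (deriv f) := hf.continuous_deriv le_rfl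
  -- choose R
  obtain ⟨R₀, hR₀⟩ := hsupp.isCompact.isBounded.subset_closedBall 0
  set R : ℝ := max R₀ 0 + 1 with hRdef
  have hR1 : 1 ≤ R := by
    have : (0:ℝ) ≤ max R₀ 0 := le_max_right _ _
    linarith
  have hR : ∀ t : ℝ, R ≤ |t| → deriv f t = 0 := by
    intro t ht
    apply image_eq_zero_of_notMem_tsupport
    intro hmem
    have := hR₀ hmem
    rw [Metric.mem_closedBall, Real.dist_eq, sub_zero] at this
    have h2 : R₀ ≤ max R₀ 0 := le_max_left _ _
    rw [hRdef] at ht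
    linarith
  -- bound C
  obtain ⟨C, hC⟩ : ∃ C : ℝ, ∀ t, |deriv f t| ≤ C := by
    obtain ⟨C, hC⟩ := (hf'cont.abs).bounded_above_of_compact_support hsupp.abs
    exact ⟨C, fun t => by simpa using hC t⟩
  have hC0 : 0 ≤ C := le_trans (abs_nonneg _) (hC 0)
  -- uniform continuity
  have hUC : UniformContinuous (deriv f) :=
    hf'cont.uniformContinuous_of_tendsto_cocompact hsupp.is_zero_at_infty
  set χ : ℝ → ℝ := (Icc (-(R+1)) (R+1)).indicator (fun _ => (1:ℝ)) with hχdef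
  have hχ0 : ∀ x, 0 ≤ χ x := fun x => Set.indicator_nonneg (fun _ _ => zero_le_one) x
  have hχle1 : ∀ x, χ x ≤ 1 := fun x =>
    Set.indicator_apply_le' (fun _ => le_refl 1) (fun _ => zero_le_one)
  have hχmeas : Measurable χ := measurable_const.indicator measurableSet_Icc
  have hχout : ∀ x, x ∉ Icc (-(R+1)) (R+1) → χ x = 0 := fun x hx => indicator_of_notMem hx _
  have hχin : ∀ x, x ∈ Icc (-(R+1)) (R+1) → χ x = 1 := fun x hx => indicator_of_mem hx _
  -- THE KEY STEP
  have key : ∀ ε : ℝ, 0 < ε →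
      Filter.limsup
          (fun lam : ℝ =>
            ENNReal.ofReal lam *
              (∫⁻ x,
                  (∫⁻ y in {y : ℝ | x ≠ y ∧ lam * |x - y| ^ ((1 : ℝ) + γ / q) < |f x - f y|},
                    ENNReal.ofReal (|x - y| ^ (γ - 1))) ^ (p / q)) ^ (1 / p))
          (𝓝[>] (0 : ℝ))
        ≤ ENNReal.ofReal ((2 / (-γ)) ^ (1 / q)) *
            (∫⁻ x, ENNReal.ofReal ((χ x * (|deriv f x| + ε)) ^ p)) ^ (1 / p) := by
    intro ε hε
    -- uniform continuity gives δ
    obtain ⟨δ₀, hδ₀, hδ₀'⟩ := Metric.uniformContinuous_iff.1 hUC ε hε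
    set δ : ℝ := min (δ₀ / 2) 1 with hδdef
    have hδpos : 0 < δ := lt_min (by linarith) one_pos
    have hδ1 : δ ≤ 1 := min_le_right _ _
    have hδlt : δ < δ₀ := lt_of_le_of_lt (min_le_left _ _) (by linarith)
    have hMVT : ∀ x y : ℝ, |x - y| ≤ δ → |f x - f y| ≤ (|deriv f x| + ε) * |x - y| := by
      intro x y hxy
      have habs := abs_le.1 hxy
      have hyIcc : y ∈ Icc (x - δ) (x + δ) := ⟨by linarith [habs.2], by linarith [habs.1]⟩
      have hxIcc : x ∈ Icc (x - δ) (x + δ) := ⟨by linarith, by linarith⟩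
      have hbound : ∀ t ∈ Icc (x - δ) (x + δ), ‖deriv f t‖ ≤ |deriv f x| + ε := by
        intro t ht
        rw [Real.norm_eq_abs]
        have hd : dist t x < δ₀ := by
          rw [Real.dist_eq]
          have h1 : |t - x| ≤ δ := abs_le.2 ⟨by linarith [ht.1], by linarith [ht.2]⟩
          linarith
        have h2 := hδ₀' hd
        rw [Real.dist_eq] at h2
        have h3 : |deriv f t| - |deriv f x| ≤ |deriv f t - deriv f x| := abs_sub_abs_le_abs_sub _ _
        linarith
      have := Convex.norm_image_sub_le_of_norm_hasDerivWithin_le (f := f) (f' := deriv f)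
        (fun t _ => (hfd t).hasDerivAt.hasDerivWithinAt) hbound (convex_Icc _ _) hxIcc hyIcc
      rw [Real.norm_eq_abs, Real.norm_eq_abs] at this
      calc |f x - f y| = |f y - f x| := abs_sub_comm _ _
        _ ≤ (|deriv f x| + ε) * |y - x| := this
        _ = (|deriv f x| + ε) * |x - y| := by rw [abs_sub_comm]
    -- nonnegativity of u
    have hρpos : ∀ x : ℝ, 0 < max δ (|x| - R) := fun x => lt_max_iff.2 (Or.inl hδpos)
    have hu0 : ∀ (lam x : ℝ), 0 ≤ lam →
        0 ≤ 2 / (-γ) * (χ x * (|deriv f x| + ε)) ^ q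
          + lam ^ q * (2 / (-γ) * (max δ (|x| - R)) ^ γ) := by
      intro lam x hlam
      apply add_nonneg
      · exact mul_nonneg hc0 (Real.rpow_nonneg (mul_nonneg (hχ0 x) (by positivity)) _)
      · exact mul_nonneg (Real.rpow_nonneg hlam _)
          (mul_nonneg hc0 (Real.rpow_nonneg (hρpos x).le _))
    -- measurability of the integrands
    have humeas : ∀ lam : ℝ, Measurable (fun x : ℝ =>
        ENNReal.ofReal ((2 / (-γ) * (χ x * (|deriv f x| + ε)) ^ q
          + lam ^ q * (2 / (-γ) * (max δ (|x| - R)) ^ γ)) ^ (p / q))) := by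
      intro lam
      have hm1 : Measurable (fun x : ℝ => χ x * (|deriv f x| + ε)) :=
        hχmeas.mul ((hf'cont.abs.add continuous_const).measurable)
      have hm2 : Measurable (fun x : ℝ => (χ x * (|deriv f x| + ε)) ^ q) :=
        (Real.continuous_rpow_const hq.le).measurable.comp hm1
      have hm3 : Continuous (fun x : ℝ => (max δ (|x| - R)) ^ γ) :=
        Continuous.rpow_const (continuous_const.max (continuous_abs.sub continuous_const))
          (fun x => Or.inl (ne_of_gt (hρpos x)))
      have hm4 : Measurable (fun x : ℝ => 2 / (-γ) * (χ x * (|deriv f x| + ε)) ^ q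
          + lam ^ q * (2 / (-γ) * (max δ (|x| - R)) ^ γ)) :=
        (hm2.const_mul _).add (((hm3.measurable).const_mul _).const_mul _)
      exact ENNReal.measurable_ofReal.comp ((Real.continuous_rpow_const hs.le).measurable.comp hm4)
    -- dominated convergence in lam along 1/(n+1)
    have hI : Tendsto (fun n : ℕ => ∫⁻ x, ENNReal.ofReal ((2 / (-γ) * (χ x * (|deriv f x| + ε)) ^ q
          + ((1:ℝ)/(n+1)) ^ q * (2 / (-γ) * (max δ (|x| - R)) ^ γ)) ^ (p / q))) atTop
        (𝓝 (∫⁻ x, ENNReal.ofReal ((2 / (-γ) * (χ x * (|deriv f x| + ε)) ^ q) ^ (p / q)))) := by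
      apply tendsto_lintegral_of_dominated_convergence
        (fun x => ENNReal.ofReal ((2 / (-γ) * (χ x * (|deriv f x| + ε)) ^ q
          + 2 / (-γ) * (max δ (|x| - R)) ^ γ) ^ (p / q)))
      · intro n; exact humeas _
      · intro n
        apply ae_of_all
        intro x
        apply ENNReal.ofReal_le_ofReal
        apply Real.rpow_le_rpow (hu0 _ x (by positivity)) _ hs.le
        apply add_le_add_right
        have h1 : ((1:ℝ)/(n+1)) ^ q ≤ 1 :=
          Real.rpow_le_one (by positivity) (by rw [div_le_one (by positivity)]; linarith [Nat.cast_nonneg (α := ℝ) n]) hq.le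
        calc ((1:ℝ)/(n+1)) ^ q * (2 / (-γ) * (max δ (|x| - R)) ^ γ)
            ≤ 1 * (2 / (-γ) * (max δ (|x| - R)) ^ γ) :=
              mul_le_mul_of_nonneg_right h1 (mul_nonneg hc0 (Real.rpow_nonneg (hρpos x).le _))
          _ = 2 / (-γ) * (max δ (|x| - R)) ^ γ := one_mul _
      · exact u_fin p γ q hp hγ hq hq2 f R δ ε C hR1 hδpos hδ1 hε hC
      · apply ae_of_all
        intro x
        have t0 : Tendsto (fun n : ℕ => ((1:ℝ)/(n+1)) ^ q) atTop (𝓝 0) := by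
          have h1 : Tendsto (fun n : ℕ => (1:ℝ) / ((n:ℝ) + 1)) atTop (𝓝 0) := tendsto_one_div_add_atTop_nhds_zero_nat
          have h2 := ((Real.continuousAt_rpow_const 0 q (Or.inr hq.le)).tendsto).comp h1
          rw [Real.zero_rpow hq'] at h2
          exact h2
        have t1 : Tendsto (fun n : ℕ => 2 / (-γ) * (χ x * (|deriv f x| + ε)) ^ q
            + ((1:ℝ)/(n+1)) ^ q * (2 / (-γ) * (max δ (|x| - R)) ^ γ)) atTop
            (𝓝 (2 / (-γ) * (χ x * (|deriv f x| + ε)) ^ q)) := by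
          have := (t0.mul_const (2 / (-γ) * (max δ (|x| - R)) ^ γ)).const_add
            (2 / (-γ) * (χ x * (|deriv f x| + ε)) ^ q)
          simpa using this
        have t2 := ((Real.continuousAt_rpow_const _ (p/q) (Or.inr hs.le)).tendsto).comp t1
        exact (ENNReal.continuous_ofReal.tendsto _).comp t2
    -- identity for the limit
    have hid : (∫⁻ x, ENNReal.ofReal ((2 / (-γ) * (χ x * (|deriv f x| + ε)) ^ q) ^ (p / q))) ^ (1/p)
        = ENNReal.ofReal ((2 / (-γ)) ^ (1 / q)) *
            (∫⁻ x, ENNReal.ofReal ((χ x * (|deriv f x| + ε)) ^ p)) ^ (1 / p) := by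
      have hptwise : ∀ x : ℝ, ENNReal.ofReal ((2 / (-γ) * (χ x * (|deriv f x| + ε)) ^ q) ^ (p / q))
          = ENNReal.ofReal ((2 / (-γ)) ^ (p / q)) *
            ENNReal.ofReal ((χ x * (|deriv f x| + ε)) ^ p) := by
        intro x
        have hb0 : (0:ℝ) ≤ χ x * (|deriv f x| + ε) := mul_nonneg (hχ0 x) (by positivity)
        rw [Real.mul_rpow hc0 (Real.rpow_nonneg hb0 _)]
        rw [← Real.rpow_mul hb0]
        rw [show q * (p / q) = p by field_simp]
        exact ENNReal.ofReal_mul (Real.rpow_nonneg hc0 _)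
      rw [lintegral_congr hptwise, lintegral_const_mul' _ _ ENNReal.ofReal_ne_top]
      rw [ENNReal.mul_rpow_of_nonneg _ _ (by positivity : (0:ℝ) ≤ 1/p)]
      congr 1
      rw [ENNReal.ofReal_rpow_of_nonneg (Real.rpow_nonneg hc0 _) (by positivity : (0:ℝ) ≤ 1/p)]
      rw [← Real.rpow_mul hc0]
      rw [show p / q * (1 / p) = 1 / q by field_simp]
    have hT := hI.ennrpow_const (1/p)
    rw [hid] at hT
    refine ge_of_tendsto hT (Eventually.of_forall fun n : ℕ => ?_)
    have hn1 : (0:ℝ) < 1/(n+1) := by positivity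
    apply Filter.limsup_le_of_le (by isBoundedDefault)
    filter_upwards [Ioo_mem_nhdsGT_of_mem (Set.left_mem_Ico.2 hn1)] with lam hlam
    refine le_trans (outer_bound p γ q hp hγ hq f hfd R δ ε hR hδpos hδ1 hε hMVT lam hlam.1) ?_
    apply ENNReal.rpow_le_rpow _ (by positivity : (0:ℝ) ≤ 1/p)
    apply lintegral_mono
    intro x
    apply ENNReal.ofReal_le_ofReal
    apply Real.rpow_le_rpow (hu0 _ x hlam.1.le) _ hs.le
    apply add_le_add_right
    apply mul_le_mul_of_nonneg_right _ (mul_nonneg hc0 (Real.rpow_nonneg (hρpos x).le _))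
    exact Real.rpow_le_rpow hlam.1.le hlam.2.le hq.le
  -- NOW pass ε → 0
  have hconst : ((-2) / γ : ℝ) = 2 / (-γ) := by ring
  have hmeasJ : ∀ ε : ℝ, Measurable (fun x : ℝ =>
      ENNReal.ofReal ((χ x * (|deriv f x| + ε)) ^ p)) := by
    intro ε
    have hm1 : Measurable (fun x : ℝ => χ x * (|deriv f x| + ε)) :=
      hχmeas.mul ((hf'cont.abs.add continuous_const).measurable)
    exact ENNReal.measurable_ofReal.comp ((Real.continuous_rpow_const hp0.le).measurable.comp hm1)
  have hJfin : ∫⁻ x, ENNReal.ofReal ((χ x * (|deriv f x| + 1)) ^ p) ≠ ∞ := by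
    have hpt : ∀ x : ℝ, ENNReal.ofReal ((χ x * (|deriv f x| + 1)) ^ p) ≤
        (Icc (-(R+1)) (R+1)).indicator (fun _ => ENNReal.ofReal ((C + 1) ^ p)) x := by
      intro x
      by_cases hx : x ∈ Icc (-(R+1)) (R+1)
      · rw [indicator_of_mem hx, hχin x hx, one_mul]
        exact ENNReal.ofReal_le_ofReal
          (Real.rpow_le_rpow (by positivity) (by linarith [hC x]) hp0.le)
      · rw [indicator_of_notMem hx, hχout x hx, zero_mul, Real.zero_rpow (ne_of_gt hp0)]
        simp
    refine ne_top_of_le_ne_top ?_ (lintegral_mono hpt)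
    rw [lintegral_indicator measurableSet_Icc, setLIntegral_const]
    exact ENNReal.mul_ne_top ENNReal.ofReal_ne_top (by simp [Real.volume_Icc])
  have htJ : Tendsto (fun n : ℕ => ∫⁻ x, ENNReal.ofReal ((χ x * (|deriv f x| + (1:ℝ)/(n+1))) ^ p))
      atTop (𝓝 (∫⁻ x, ENNReal.ofReal (|deriv f x| ^ p))) := by
    apply tendsto_lintegral_of_dominated_convergence
      (fun x => ENNReal.ofReal ((χ x * (|deriv f x| + 1)) ^ p))
    · intro n; exact hmeasJ _
    · intro n
      apply ae_of_all
      intro x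
      apply ENNReal.ofReal_le_ofReal
      apply Real.rpow_le_rpow (mul_nonneg (hχ0 x) (by positivity)) _ hp0.le
      apply mul_le_mul_of_nonneg_left _ (hχ0 x)
      have : (1:ℝ)/(n+1) ≤ 1 := by
        rw [div_le_one (by positivity)]; linarith [Nat.cast_nonneg (α := ℝ) n]
      linarith
    · exact hJfin
    · apply ae_of_all
      intro x
      have t1 : Tendsto (fun n : ℕ => χ x * (|deriv f x| + (1:ℝ)/(n+1))) atTop
          (𝓝 (χ x * |deriv f x|)) := by
        have := (tendsto_one_div_add_atTop_nhds_zero_nat.const_add (|deriv f x|)).const_mul (χ x)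
        simpa using this
      have t2 := ((Real.continuousAt_rpow_const _ p (Or.inr hp0.le)).tendsto).comp t1
      have t3 := (ENNReal.continuous_ofReal.tendsto _).comp t2
      have hval : χ x * |deriv f x| = |deriv f x| := by
        by_cases hx : x ∈ Icc (-(R+1)) (R+1)
        · rw [hχin x hx, one_mul]
        · rw [hχout x hx, zero_mul]
          symm
          rw [abs_eq_zero]
          apply hR
          rw [mem_Icc, not_and_or, not_le, not_le] at hx
          rcases hx with h | h
          · rw [abs_of_nonpos (by linarith)]; linarith
          · rw [abs_of_pos (by linarith)]; linarith
      rw [hval] at t3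
      exact t3
  have hfinal : Tendsto (fun n : ℕ => ENNReal.ofReal ((2 / (-γ)) ^ (1 / q)) *
      (∫⁻ x, ENNReal.ofReal ((χ x * (|deriv f x| + (1:ℝ)/(n+1))) ^ p)) ^ (1 / p)) atTop
      (𝓝 (ENNReal.ofReal ((2 / (-γ)) ^ (1 / q)) *
        (∫⁻ x, ENNReal.ofReal (|deriv f x| ^ p)) ^ (1 / p))) :=
    ENNReal.Tendsto.const_mul (htJ.ennrpow_const (1/p)) (Or.inr ENNReal.ofReal_ne_top)
  rw [show (-2 / γ : ℝ) = 2 / (-γ) by ring]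
  refine ge_of_tendsto hfinal (Eventually.of_forall fun n : ℕ => ?_)
  exact key ((1:ℝ)/(n+1)) (by positivity)
end
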